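/- arXiv:1205.1083 — 4 statements merged into one kernel-verified Lean document; each statement's English description precedes it below -/
import Mathlib

section
/- Let R be a UFD, I ⊆ R an ideal, and f, g ∈ R with gcd(f, g) = 1. Then multiplication by g induces an isomorphism of R-modules R/((I : g)·f) ≅ (I·f, g)/(I·f), where (I·f, g) denotes the ideal generated by I·f and g. -/
/-- In a UFD with `gcd(f,g)=1`, multiplication by `g` induces an `R`-module isomorphism
`R/((I:g)·f) ≃ (I·f, g)/(I·f)`. -/
theorem stmt1 {R : Type*} [CommRing R] [IsDomain R] [UniqueFactorizationMonoid R]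
    (I : Ideal R) (f g : R) (hfg : IsRelPrime f g) :
    ∃ e : (R ⧸ (I.colon (Ideal.span {g}) * Ideal.span {f})) ≃ₗ[R]
        (Submodule.map (Submodule.mkQ (I * Ideal.span {f} : Ideal R))
          ((I * Ideal.span {f} + Ideal.span {g} : Ideal R) : Submodule R R)),
      ∀ b : R,
        (e (Submodule.Quotient.mk b) : R ⧸ (I * Ideal.span {f} : Ideal R)) =
          Submodule.mkQ (I * Ideal.span {f} : Ideal R) (b * g) := by
  set J : Ideal R := I * Ideal.span {f}
  set φ : R →ₗ[R] R ⧸ J :=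
    (Submodule.mkQ J).comp (LinearMap.toSpanSingleton R R g) with hφ
  have hφval : ∀ b : R, φ b = Submodule.mkQ J (b * g) := by
    intro b
    simp [hφ, LinearMap.toSpanSingleton, smul_eq_mul]
  have hker : LinearMap.ker φ = I.colon (Ideal.span {g}) * Ideal.span {f} := by
    ext b
    simp only [LinearMap.mem_ker, hφval, Submodule.mkQ_apply, Submodule.Quotient.mk_eq_zero]
    constructor
    · intro hb
      rw [Ideal.mem_mul_span_singleton] at hb
      obtain ⟨a, haI, haf⟩ := hb
      have hfb : f ∣ b := hfg.dvd_of_dvd_mul_right ⟨a, by linear_combination -haf⟩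
      obtain ⟨c, rfl⟩ := hfb
      rcases eq_or_ne f 0 with rfl | hf0
      · simp
      · have hcg : c * g ∈ I := by
          have : f * (c * g) = f * a := by linear_combination -haf
          have := mul_left_cancel₀ hf0 this
          rwa [this]
        have hc : c ∈ I.colon (Ideal.span {g}) := by
          rwa [Ideal.mem_colon_span_singleton]
        rw [mul_comm f c]
        exact Ideal.mul_mem_mul hc (Ideal.mem_span_singleton_self f)
    · intro hb
      have h1 : b * g ∈ (I.colon (Ideal.span {g}) * Ideal.span {f}) * Ideal.span {g} :=
        Ideal.mul_mem_mul hb (Ideal.mem_span_singleton_self g)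
      have h2 : (I.colon (Ideal.span {g}) * Ideal.span {f}) * Ideal.span {g}
          ≤ I * Ideal.span {f} := by
        rw [mul_right_comm]
        refine Ideal.mul_mono ?_ le_rfl
        rw [Ideal.mul_le]
        intro r hr s hs
        rw [Ideal.mem_span_singleton] at hs
        obtain ⟨t, rfl⟩ := hs
        rw [Ideal.mem_colon_span_singleton] at hr
        have : r * (g * t) = t * (r * g) := by ring
        rw [this]
        exact Ideal.mul_mem_left _ _ hr
      exact h2 h1
  have hrange : LinearMap.range φ =
      Submodule.map (Submodule.mkQ J) ((J + Ideal.span {g} : Ideal R) : Submodule R R) := by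
    have : LinearMap.range φ = Submodule.map (Submodule.mkQ J) (Ideal.span {g}) := by
      rw [hφ, LinearMap.range_comp, ← LinearMap.span_singleton_eq_range]
    rw [this]
    have hJ : Submodule.map (Submodule.mkQ J) (J : Submodule R R) = ⊥ := by
      rw [Submodule.eq_bot_iff]
      rintro x ⟨y, hy, rfl⟩
      simpa using (Submodule.Quotient.mk_eq_zero _).2 hy
    rw [show ((J + Ideal.span {g} : Ideal R) : Submodule R R) = (J : Submodule R R) ⊔ Ideal.span {g} from rfl, Submodule.map_sup, hJ, bot_sup_eq]
  refine ⟨(Submodule.quotEquivOfEq _ _ hker.symm).trans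
    (φ.quotKerEquivRange.trans (LinearEquiv.ofEq _ _ hrange)), ?_⟩
  intro b
  rfl
end

section
/- Let R be a commutative ring, I ⊆ R an ideal, and f, g ∈ R with f a non-zero-divisor and gcd-type hypothesis (I·f : g) = (I : g)·f. Then (I·f : g)/(I·f) ≅ ((I : g)/I)(shifted), i.e., there is an R-module isomorphism (I·f : g)/(I·f) ≅ (I : g)/I given by division by f. -/
/-!
Multiplication by `f` induces an `R`-linear map `R ⧸ I → R ⧸ I·f`, injective because `f` is a
non-zero-divisor. It carries the image of `(I : g)` onto the image of `(I : g)·f`, which by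
hypothesis is the image of `(I·f : g)`.
-/

namespace Ideal

variable {R : Type*} [CommRing R]

theorem map_mulRight_eq_mul_span_singleton (J : Ideal R) (f : R) :
    Submodule.map (LinearMap.mulRight R f) (J : Submodule R R) = J * span {f} := by
  ext x
  rw [mem_mul_span_singleton]
  rfl

def quotMulRight (I : Ideal R) (f : R) : R ⧸ I →ₗ[R] R ⧸ (I * span {f}) :=
  Submodule.mapQ (I : Submodule R R) (I * span {f} : Ideal R) (LinearMap.mulRight R f)
    fun _ ha => mul_mem_mul ha (mem_span_singleton_self f)

theorem quotMulRight_mk (I : Ideal R) (f a : R) :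
    quotMulRight I f (Submodule.mkQ (I : Submodule R R) a) =
      Submodule.mkQ (I * span {f} : Ideal R) (a * f) :=
  rfl

theorem quotMulRight_injective (I : Ideal R) {f : R} (hf : f ∈ nonZeroDivisors R) :
    Function.Injective (quotMulRight I f) := by
  rw [← LinearMap.ker_eq_bot, Submodule.eq_bot_iff]
  intro x hx
  obtain ⟨a, rfl⟩ := Submodule.mkQ_surjective _ x
  rw [LinearMap.mem_ker, quotMulRight_mk, Submodule.mkQ_apply,
    Submodule.Quotient.mk_eq_zero, mem_mul_span_singleton] at hx
  obtain ⟨b, hb, hbf⟩ := hx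
  rw [mul_cancel_right_mem_nonZeroDivisors hf] at hbf
  rw [Submodule.mkQ_apply, Submodule.Quotient.mk_eq_zero, ← hbf]
  exact hb

theorem quotMulRight_comp_mkQ (I : Ideal R) (f : R) :
    quotMulRight I f ∘ₗ Submodule.mkQ (I : Submodule R R) =
      Submodule.mkQ (I * span {f} : Ideal R) ∘ₗ LinearMap.mulRight R f :=
  rfl

theorem map_quotMulRight_map_mkQ (I J : Ideal R) (f : R) :
    Submodule.map (quotMulRight I f)
        (Submodule.map (Submodule.mkQ (I : Submodule R R)) (J : Submodule R R)) =
      Submodule.map (Submodule.mkQ (I * span {f} : Ideal R)) (J * span {f} : Ideal R) := by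
  rw [← Submodule.map_comp, quotMulRight_comp_mkQ, Submodule.map_comp,
    map_mulRight_eq_mul_span_singleton]

end Ideal

/-- If `f` is a non-zero-divisor and `(I·f : g) = (I : g)·f`, then
`(I·f : g)/(I·f) ≅ (I : g)/I` as `R`-modules, the map being "division by `f`"
(it sends the class of `a·f`, for `a ∈ (I : g)`, to the class of `a`). -/
theorem stmt3 {R : Type*} [CommRing R] (I : Ideal R) (f g : R)
    (hf : f ∈ nonZeroDivisors R)
    (hcolon : (I * Ideal.span {f}).colon (Ideal.span {g}) =
      I.colon (Ideal.span {g}) * Ideal.span {f}) :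
    ∃ e : (Submodule.map (Submodule.mkQ (I * Ideal.span {f} : Ideal R))
            (((I * Ideal.span {f}).colon (Ideal.span {g}) : Ideal R) : Submodule R R)) ≃ₗ[R]
          (Submodule.map (Submodule.mkQ (I : Submodule R R))
            ((I.colon (Ideal.span {g}) : Ideal R) : Submodule R R)),
      ∀ (a : R), a ∈ I.colon (Ideal.span {g}) →
        ∀ x : (Submodule.map (Submodule.mkQ (I * Ideal.span {f} : Ideal R))
            (((I * Ideal.span {f}).colon (Ideal.span {g}) : Ideal R) : Submodule R R)),
          (x : R ⧸ (I * Ideal.span {f} : Ideal R)) =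
            Submodule.mkQ (I * Ideal.span {f} : Ideal R) (a * f) →
          ((e x : R ⧸ (I : Ideal R)) = Submodule.mkQ (I : Submodule R R) a) := by
  have himage : Submodule.map (I.quotMulRight f)
        (Submodule.map (I : Submodule R R).mkQ (I.colon (Ideal.span {g}))) =
      Submodule.map (I * Ideal.span {f} : Ideal R).mkQ
        ((I * Ideal.span {f}).colon (Ideal.span {g})) := by
    rw [hcolon, Ideal.map_quotMulRight_map_mkQ]
  refine ⟨(LinearEquiv.ofEq _ _ himage.symm).trans
    (Submodule.equivMapOfInjective _ (Ideal.quotMulRight_injective I hf) _).symm, ?_⟩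
  intro a ha x hx
  have hmk : (I : Submodule R R).mkQ a ∈
      Submodule.map (I : Submodule R R).mkQ (I.colon (Ideal.span {g})) :=
    Submodule.mem_map_of_mem ha
  have hpre : (Submodule.equivMapOfInjective _ (Ideal.quotMulRight_injective I hf) _).symm
      (LinearEquiv.ofEq _ _ himage.symm x) = ⟨_, hmk⟩ :=
    (LinearEquiv.symm_apply_eq _).mpr (Subtype.ext hx)
  exact congrArg Subtype.val hpre
end

section
/- Let R be a commutative ring, I an ideal, and g ∈ R a non-zero-divisor on R/I (i.e., (I : g) = I). Let f ∈ R be a non-zero-divisor with (I·f : g) = (I : g)·f. Then the ideal (I·f, g) has the presentation: a syzygy of the generators g_0·f, ..., g_n·f, g (where I = (g_0,...,g_n)) is generated by the syzygies of g_0,...,g_n together with the Koszul syzygies g·e_i − f·g_i·e_{n+1}. -/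
/-!
If `g` is a non-zero-divisor modulo `J = (u₀, …, uₘ₋₁)`, every syzygy `w` of `(u, g)` has its last
coordinate in `(J : g) = J`; subtracting a combination of Koszul syzygies kills that coordinate, and
what remains is a syzygy of `u`. For `u = gᵢ·f` the hypothesis `(I·f : g) = I·f` is exactly this
regularity, and since `f` is a non-zero-divisor the syzygies of `gᵢ·f` are those of `gᵢ`.
-/

open Matrix

section

variable {R : Type*} [CommRing R]

theorem Ideal.span_range_mul_right {ι : Type*} (v : ι → R) (f : R) :
    Ideal.span (Set.range fun i => v i * f) = Ideal.span (Set.range v) * Ideal.span {f} := by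
  rw [Ideal.span_mul_span', Set.mul_singleton, ← Set.range_comp]
  rfl

section

variable {ι : Type*} [Fintype ι]

def syzygies (v : ι → R) : Submodule R (ι → R) :=
  LinearMap.ker (Fintype.linearCombination R v)

theorem mem_syzygies {v w : ι → R} : w ∈ syzygies v ↔ w ⬝ᵥ v = 0 := by
  simp [syzygies, Fintype.linearCombination_apply, dotProduct]

theorem syzygies_mul_right {v : ι → R} {f : R} (hf : f ∈ nonZeroDivisors R) :
    syzygies (fun i => v i * f) = syzygies v := by
  ext w
  have hdot : (w ⬝ᵥ fun i => v i * f) = (w ⬝ᵥ v) * f := by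
    simp only [dotProduct, Finset.sum_mul, mul_assoc]
  rw [mem_syzygies, mem_syzygies, hdot, mul_right_mem_nonZeroDivisors_eq_zero_iff hf]

end

namespace Fin

variable {m : ℕ}

theorem dotProduct_snoc (w : Fin (m + 1) → R) (u : Fin m → R) (a : R) :
    w ⬝ᵥ (snoc u a : Fin (m + 1) → R) = (w ∘ castSucc) ⬝ᵥ u + w (last m) * a := by
  simp [dotProduct, sum_univ_castSucc]

def koszulSyzygy (u : Fin m → R) (g : R) (i : Fin m) : Fin (m + 1) → R :=
  g • Pi.single i.castSucc 1 - u i • Pi.single (last m) 1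

@[simp]
theorem koszulSyzygy_comp_castSucc (u : Fin m → R) (g : R) (i : Fin m) :
    koszulSyzygy u g i ∘ castSucc = g • Pi.single i 1 := by
  ext j
  rcases eq_or_ne j i with rfl | hji
  · simp [koszulSyzygy, (castSucc_lt_last j).ne]
  · simp [koszulSyzygy, (castSucc_lt_last j).ne, hji]

@[simp]
theorem koszulSyzygy_last (u : Fin m → R) (g : R) (i : Fin m) :
    koszulSyzygy u g i (last m) = -u i := by
  simp [koszulSyzygy, (castSucc_lt_last i).ne']

theorem koszulSyzygy_mem_syzygies (u : Fin m → R) (g : R) (i : Fin m) :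
    koszulSyzygy u g i ∈ syzygies (snoc u g : Fin (m + 1) → R) := by
  rw [mem_syzygies, dotProduct_snoc, koszulSyzygy_comp_castSucc, koszulSyzygy_last,
    smul_dotProduct, single_one_dotProduct, smul_eq_mul]
  ring

theorem last_mem_colon_of_mem_syzygies_snoc {u : Fin m → R} {g : R} {w : Fin (m + 1) → R}
    (hw : w ∈ syzygies (snoc u g : Fin (m + 1) → R)) :
    w (last m) ∈ (Ideal.span (Set.range u)).colon (Ideal.span {g}) := by
  rw [mem_syzygies, dotProduct_snoc] at hw
  rw [Ideal.mem_colon_span_singleton, eq_neg_of_add_eq_zero_right hw]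
  exact neg_mem ((Submodule.mem_span_range_iff_exists_fun R).2 ⟨w ∘ castSucc, rfl⟩)

theorem syzygies_snoc_eq_span {u : Fin m → R} {g : R}
    (hg : (Ideal.span (Set.range u)).colon (Ideal.span {g}) ≤ Ideal.span (Set.range u)) :
    syzygies (snoc u g : Fin (m + 1) → R) =
      Submodule.span R ({w | w (last m) = 0 ∧ w ∘ castSucc ∈ syzygies u} ∪
        Set.range (koszulSyzygy u g)) := by
  refine le_antisymm (fun w hw => ?_) (Submodule.span_le.2 ?_)
  · obtain ⟨a, ha⟩ := (Submodule.mem_span_range_iff_exists_fun R).1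
      (hg (last_mem_colon_of_mem_syzygies_snoc hw))
    set x := w + ∑ i, a i • koszulSyzygy u g i with hx
    have hx_mem : x ∈ syzygies (snoc u g : Fin (m + 1) → R) :=
      add_mem hw (sum_mem fun i _ => Submodule.smul_mem _ _ (koszulSyzygy_mem_syzygies u g i))
    have hx_last : x (last m) = 0 := by
      simp [hx, Finset.sum_apply, ← ha]
    have hx_init : x ∘ castSucc ∈ syzygies u := by
      rw [mem_syzygies, dotProduct_snoc, hx_last, zero_mul, add_zero] at hx_mem
      exact mem_syzygies.2 hx_mem
    rw [show w = x - ∑ i, a i • koszulSyzygy u g i by rw [hx, add_sub_cancel_right]]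
    exact sub_mem (Submodule.subset_span (Or.inl ⟨hx_last, hx_init⟩))
      (sum_mem fun i _ => Submodule.smul_mem _ _ (Submodule.subset_span (Or.inr ⟨i, rfl⟩)))
  · rintro w (⟨hlast, hinit⟩ | ⟨i, rfl⟩)
    · rw [SetLike.mem_coe, mem_syzygies, dotProduct_snoc, hlast, zero_mul, add_zero]
      exact mem_syzygies.1 hinit
    · exact koszulSyzygy_mem_syzygies u g i

end Fin

end

/-- Presentation of `(I·f, g)` in the non-zero-divisor case: the syzygies of the
generators `g₀·f, …, gₙ·f, g` are generated by the syzygies of `g₀, …, gₙ`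
(extended by zero in the last coordinate) together with the Koszul syzygies
`g·e_i − f·g_i·e_{n+1}`. -/
theorem stmt5 {R : Type*} [CommRing R] {n : ℕ}
    (gv : Fin (n + 1) → R) (f g : R) (I : Ideal R)
    (hI : I = Ideal.span (Set.range gv))
    (hgnzd : I.colon (Ideal.span {g}) = I)
    (hf : f ∈ nonZeroDivisors R)
    (hcolon : (I * Ideal.span {f}).colon (Ideal.span {g}) =
      I.colon (Ideal.span {g}) * Ideal.span {f}) :
    {w : Fin (n + 2) → R | ∑ i, w i * (Fin.snoc (fun j => gv j * f) g : Fin (n + 2) → R) i = 0} =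
      ↑(Submodule.span R
        ({w : Fin (n + 2) → R |
            w (Fin.last (n + 1)) = 0 ∧ ∑ i, w (Fin.castSucc i) * gv i = 0} ∪
         {w : Fin (n + 2) → R | ∃ i : Fin (n + 1),
            w = g • (Pi.single (Fin.castSucc i) (1 : R) : Fin (n + 2) → R)
              - (f * gv i) • (Pi.single (Fin.last (n + 1)) (1 : R) : Fin (n + 2) → R)})) := by
  have hregular : (Ideal.span (Set.range fun j => gv j * f)).colon (Ideal.span {g}) ≤
      Ideal.span (Set.range fun j => gv j * f) := by
    rw [Ideal.span_range_mul_right, ← hI, hcolon, hgnzd]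
  have hkoszul : {w : Fin (n + 2) → R | ∃ i : Fin (n + 1),
      w = g • (Pi.single (Fin.castSucc i) (1 : R) : Fin (n + 2) → R)
        - (f * gv i) • (Pi.single (Fin.last (n + 1)) (1 : R) : Fin (n + 2) → R)} =
      Set.range (Fin.koszulSyzygy (fun j => gv j * f) g) := by
    ext w
    simp [Fin.koszulSyzygy, mul_comm f, eq_comm]
  have hsyz := Fin.syzygies_snoc_eq_span hregular
  rw [syzygies_mul_right hf] at hsyz
  rw [hkoszul]
  -- the two sides of `hsyz` unfold to the sets in the goal: `w ∈ syzygies v` is `∑ i, w i * v i = 0`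
  exact congrArg SetLike.coe hsyz
end

section
/- With the notation of the de Jonquières parametrization (g_0 f : ... : g_n f : g) whose implicit equation is F = (g(g') − y_{n+1} f(g')·D)/gcd(g(g'), f(g')·D): one has deg(F) = deg(g)·d' − deg(gcd(g(g'), f(g')·D)), where d' is the degree of the inverse Cremona map. In particular deg(F) ≤ deg(g)·d'. -/
open MvPolynomial

/-! Composing with `g'` multiplies degrees by `d'`, so `c * G₁ = g(g')` has degree `(d + df) d'`
and `c * H₁ = f(g') D` has degree `df d' + deg D`, where `deg D = d d' - 1` is read off from
`gᵢ(g') = xᵢ D`. Hence `deg H₁ + 1 = deg G₁`. No monomial of `G₁` involves `y_{n+1}` while every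
monomial of `y_{n+1} H₁` does, so nothing cancels and `deg F = deg G₁ = (d + df) d' - deg c`. -/

namespace MvPolynomial

variable {σ τ R : Type*} [CommRing R]

theorem totalDegree_rename_of_injective {f : σ → τ} (hf : Function.Injective f)
    (p : MvPolynomial σ R) : (rename f p).totalDegree = p.totalDegree := by
  rw [← weightedTotalDegree_one, weightedTotalDegree_rename_of_injective hf,
    ← weightedTotalDegree_one]
  rfl

theorem totalDegree_rename_sub_X_mul_rename [Nontrivial R] {f : σ → τ}
    (hf : Function.Injective f) {j : τ} (hj : j ∉ Set.range f) {G H : MvPolynomial σ R} (hGH : H.totalDegree + 1 ≤ G.totalDegree) :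
    (rename f G - X j * rename f H).totalDegree = G.totalDegree := by
  classical
  refine le_antisymm ?_ ?_
  · refine (totalDegree_sub _ _).trans (max_le (totalDegree_rename_le f G) ?_)
    calc (X j * rename f H).totalDegree
        ≤ (X j : MvPolynomial τ R).totalDegree + (rename f H).totalDegree := totalDegree_mul _ _
      _ ≤ 1 + H.totalDegree := by
          rw [totalDegree_X]
          exact Nat.add_le_add_left (totalDegree_rename_le f H) 1
      _ ≤ G.totalDegree := by omega
  · rw [← totalDegree_rename_of_injective hf G]
    refine totalDegree_le_of_support_subset fun m hm => ?_
    have hmj : j ∉ m.support := by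
      rw [support_rename_of_injective hf, Finset.mem_image] at hm
      obtain ⟨m', -, rfl⟩ := hm
      exact Finsupp.notMem_support_iff.mpr (Finsupp.mapDomain_of_notMem_range _ _ hj)
    rw [mem_support_iff, coeff_sub, coeff_X_mul', if_neg hmj, sub_zero]
    exact mem_support_iff.mp hm

theorem IsHomogeneous.totalDegree_add_one_of_aeval_eq_X_mul [IsDomain R] {p : MvPolynomial σ R}
    {g : σ → MvPolynomial τ R} {D : MvPolynomial τ R} {i : τ} {d d' : ℕ}
    (hp : p.IsHomogeneous d) (hg : ∀ i, (g i).IsHomogeneous d') (hD : D ≠ 0)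
    (h : MvPolynomial.aeval g p = X i * D) : D.totalDegree + 1 = d' * d := by
  have hXD : X i * D ≠ 0 := mul_ne_zero (X_ne_zero i) hD
  rw [← (hp.aeval g hg).totalDegree (h ▸ hXD), h, totalDegree_mul_of_isDomain (X_ne_zero i) hD,
    totalDegree_X, add_comm]

end MvPolynomial

theorem stmt11_general {k : Type*} [Field k] {n d d' df : ℕ}
    (gv g' : Fin (n + 1) → MvPolynomial (Fin (n + 1)) k)
    (D f gp c G₁ H₁ : MvPolynomial (Fin (n + 1)) k)
    (hgv : ∀ i, (gv i).IsHomogeneous d)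
    (hg' : ∀ i, (g' i).IsHomogeneous d')
    (hf : f.IsHomogeneous df) (hgp : gp.IsHomogeneous (d + df))
    (hD : D ≠ 0)
    (hinv : ∀ i, MvPolynomial.aeval g' (gv i) = MvPolynomial.X i * D)
    (hA0 : MvPolynomial.aeval g' gp ≠ 0) (hB0 : MvPolynomial.aeval g' f ≠ 0)
    (hG₁ : MvPolynomial.aeval g' gp = c * G₁)
    (hH₁ : MvPolynomial.aeval g' f * D = c * H₁) :
    (rename Fin.castSucc G₁
        - X (Fin.last (n + 1)) * rename Fin.castSucc H₁ :
        MvPolynomial (Fin (n + 2)) k).totalDegree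
      = (d + df) * d' - c.totalDegree ∧
    (rename Fin.castSucc G₁
        - X (Fin.last (n + 1)) * rename Fin.castSucc H₁ :
        MvPolynomial (Fin (n + 2)) k).totalDegree ≤ (d + df) * d' := by
  obtain ⟨hc0, hG₁0⟩ := mul_ne_zero_iff.mp (hG₁ ▸ hA0)
  have hH₁0 : H₁ ≠ 0 := right_ne_zero_of_mul (hH₁ ▸ mul_ne_zero hB0 hD)
  have hdeg : (d + df) * d' = d' * df + d' * d := by ring
  have hcG : c.totalDegree + G₁.totalDegree = (d + df) * d' := by
    rw [← totalDegree_mul_of_isDomain hc0 hG₁0, ← hG₁, (hgp.aeval g' hg').totalDegree hA0,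
      mul_comm]
  have hcH : c.totalDegree + H₁.totalDegree + 1 = (d + df) * d' := by
    rw [← totalDegree_mul_of_isDomain hc0 hH₁0, ← hH₁, totalDegree_mul_of_isDomain hB0 hD,
      (hf.aeval g' hg').totalDegree hB0, add_assoc,
      (hgv 0).totalDegree_add_one_of_aeval_eq_X_mul hg' hD (hinv 0), hdeg]
  rw [totalDegree_rename_sub_X_mul_rename (Fin.castSucc_injective _)
    (by simp [Fin.range_castSucc]) (by omega)]
  omega

/-- Degree of the implicit equation of a de Jonquières parametrization
`(g₀f : … : gₙf : g)`: with `A = g(g')`, `Bp = f(g')·D`, `c = gcd(A, Bp)` and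
cofactors `A = c·G₁`, `Bp = c·H₁`, the implicit equation is the monoid
`F = G₁ − y_{n+1}·H₁` and `deg F = deg(g)·d' − deg c`; in particular
`deg F ≤ deg(g)·d'`. -/
theorem stmt11 {k : Type*} [Field k] {n d d' df : ℕ}
    (gv g' : Fin (n + 1) → MvPolynomial (Fin (n + 1)) k)
    (D f gp c G₁ H₁ : MvPolynomial (Fin (n + 1)) k)
    (hd : 1 ≤ d) (hd' : 1 ≤ d')
    (hgv : ∀ i, (gv i).IsHomogeneous d)
    (hg' : ∀ i, (g' i).IsHomogeneous d')
    (hf : f.IsHomogeneous df) (hgp : gp.IsHomogeneous (d + df))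
    (hD : D ≠ 0)
    (hinv : ∀ i, MvPolynomial.aeval g' (gv i) = MvPolynomial.X i * D)
    (hA0 : MvPolynomial.aeval g' gp ≠ 0) (hB0 : MvPolynomial.aeval g' f ≠ 0)
    (hcgcd : c ∣ MvPolynomial.aeval g' gp ∧ c ∣ MvPolynomial.aeval g' f * D ∧
      ∀ e, e ∣ MvPolynomial.aeval g' gp → e ∣ MvPolynomial.aeval g' f * D → e ∣ c)
    (hG₁ : MvPolynomial.aeval g' gp = c * G₁)
    (hH₁ : MvPolynomial.aeval g' f * D = c * H₁) :
    (rename Fin.castSucc G₁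
        - X (Fin.last (n + 1)) * rename Fin.castSucc H₁ :
        MvPolynomial (Fin (n + 2)) k).totalDegree
      = (d + df) * d' - c.totalDegree ∧
    (rename Fin.castSucc G₁
        - X (Fin.last (n + 1)) * rename Fin.castSucc H₁ :
        MvPolynomial (Fin (n + 2)) k).totalDegree ≤ (d + df) * d' :=
  stmt11_general gv g' D f gp c G₁ H₁ hgv hg' hf hgp hD hinv hA0 hB0 hG₁ hH₁
end
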